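/- Fix an integer q ≥ 1 and a real number τ > 1. Let 𝒜 be a finite k-uniform r-spread family (for some r ≥ 1) and let F ⊆ 𝒜. Then there exist a family 𝒮 ⊆ ∂_{≤q} 𝒜, families F_S ⊆ 𝒜(S) for each S ∈ 𝒮, and a family ℛ ⊆ F, such that F is the disjoint union of ℛ and the families {S ∪ F : F ∈ F_S} over S ∈ 𝒮; each F_S is τ-homogeneous with respect to 𝒜(S) and satisfies |F_S| ≥ 16 · τ^{−q} · |𝒜(S)|; and |ℛ| ≤ 32 · τ^{−q} · |𝒜|. -/

import Mathlib

open Finset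
open scoped Classical

variable {γ : Type*}

/-- `F(B) = {F \ B : F ∈ F, B ⊆ F}`. -/
def famRestrict [DecidableEq γ] (F : Finset (Finset γ)) (B : Finset γ) : Finset (Finset γ) :=
  (F.filter fun A => B ⊆ A).image fun A => A \ B

/-- `F[ℬ] = {F ∈ F : ∃ B ∈ ℬ, B ⊆ F}`. -/
def famAbove [DecidableEq γ] (F ℬ : Finset (Finset γ)) : Finset (Finset γ) :=
  F.filter fun A => ∃ B ∈ ℬ, B ⊆ A

/-- The shadow `∂_h F`. -/
def famShadow [DecidableEq γ] (F : Finset (Finset γ)) (h : ℕ) : Finset (Finset γ) :=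
  F.biUnion fun A => Finset.powersetCard h A

/-- The shadow `∂_{≤h} F`. -/
def famShadowLe [DecidableEq γ] (F : Finset (Finset γ)) (h : ℕ) : Finset (Finset γ) :=
  (Finset.range (h + 1)).biUnion fun j => famShadow F j

/-- `P` is a sunflower with `s` petals and core `K`: `P` consists of `s` sets, `K` is
the intersection of all members of `P`, and any two distinct members intersect in `K`. -/
def IsSunflower [DecidableEq γ] (P : Finset (Finset γ)) (s : ℕ) (K : Finset γ) : Prop :=
  P.card = s ∧ ∃ hP : P.Nonempty, K = P.inf' hP id ∧
    ∀ A ∈ P, ∀ B ∈ P, A ≠ B → A ∩ B = K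

/-- `F` contains no sunflower with `s` petals (with arbitrary core). -/
def SunflowerFree [DecidableEq γ] (F : Finset (Finset γ)) (s : ℕ) : Prop :=
  ∀ P ⊆ F, ∀ K : Finset γ, ¬ IsSunflower P s K

/-- `φ(s,t)`: the maximal size of a family of `t`-element sets with no sunflower
with `s` petals. -/
noncomputable def phi (s t : ℕ) : ℕ :=
  sSup {m : ℕ | ∃ F : Finset (Finset ℕ),
    (∀ A ∈ F, A.card = t) ∧ SunflowerFree F s ∧ F.card = m}

/-- `G` is `R`-spread: `|G(X)| ≤ R^{-|X|} |G|` for every `X`. -/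
def IsSpread [DecidableEq γ] (R : ℝ) (G : Finset (Finset γ)) : Prop :=
  ∀ X : Finset γ, ((famRestrict G X).card : ℝ) ≤ R ^ (-(X.card : ℤ)) * G.card

/-- `F` is `k`-uniform. -/
def IsUniform (F : Finset (Finset γ)) (k : ℕ) : Prop := ∀ A ∈ F, A.card = k

/-- `𝒜` is `(r,t)`-spread: `𝒜(T)` is `r`-spread for every `T ∈ ∂_{≤t} 𝒜`. -/
def IsRTSpread [DecidableEq γ] (𝒜 : Finset (Finset γ)) (r : ℝ) (t : ℕ) : Prop :=
  ∀ T ∈ famShadowLe 𝒜 t, IsSpread r (famRestrict 𝒜 T)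

/-- `F` is `τ`-homogeneous with respect to `𝒜`:
`|F(X)| ⬝ |𝒜| ≤ τ^{|X|} ⬝ |F| ⬝ |𝒜(X)|` for every `X`. -/
def IsHomog [DecidableEq γ] (τ : ℝ) (F 𝒜 : Finset (Finset γ)) : Prop :=
  ∀ X : Finset γ,
    ((famRestrict F X).card : ℝ) * 𝒜.card ≤ τ ^ X.card * F.card * (famRestrict 𝒜 X).card

/-!
Greedy density increment. If `|F| ≤ 32 τ^{-q} |𝒜|` put all of `F` into `ℛ`. Otherwise take a
largest set `S` along which `F` is denser than in `𝒜` by a factor `τ^{|S|}`, i.e.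
`τ^{|S|} |F| |𝒜(S)| ≤ |F(S)| |𝒜|` (the empty set always qualifies). Maximality of `S` makes
`F(S)` `τ`-homogeneous in `𝒜(S)`. The density gain gives `|F(S)| > 32 τ^{|S|-q} |𝒜(S)|`, which is
at least `32 τ^{-q} |𝒜(S)|` and, since `F(S) ⊆ 𝒜(S)`, forces `|S| ≤ q`. Recurse on the members
of `F` not containing `S`.
-/

section HomogeneousDecomposition

variable {α : Type*} [DecidableEq α]

lemma mem_famRestrict {F : Finset (Finset α)} {S B : Finset α} :
    B ∈ famRestrict F S ↔ ∃ A ∈ F, S ⊆ A ∧ A \ S = B := by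
  simp only [famRestrict, mem_image, mem_filter, and_assoc]

lemma famRestrict_nonempty {F : Finset (Finset α)} {S : Finset α} :
    (famRestrict F S).Nonempty ↔ ∃ A ∈ F, S ⊆ A := by
  simp only [famRestrict, image_nonempty, filter_nonempty_iff]

@[simp]
lemma famRestrict_empty (F : Finset (Finset α)) : famRestrict F ∅ = F := by
  ext A
  simp [famRestrict]

lemma famRestrict_mono {F G : Finset (Finset α)} (h : F ⊆ G) (S : Finset α) :
    famRestrict F S ⊆ famRestrict G S :=
  image_subset_image (filter_subset_filter _ h)

lemma image_union_famRestrict (F : Finset (Finset α)) (S : Finset α) :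
    (famRestrict F S).image (fun A => S ∪ A) = F.filter (fun A => S ⊆ A) := by
  ext B
  simp only [mem_image, mem_famRestrict, mem_filter]
  constructor
  · rintro ⟨-, ⟨A, hA, hSA, rfl⟩, rfl⟩
    rw [union_sdiff_of_subset hSA]
    exact ⟨hA, hSA⟩
  · rintro ⟨hB, hSB⟩
    exact ⟨B \ S, ⟨B, hB, hSB, rfl⟩, union_sdiff_of_subset hSB⟩

lemma famRestrict_famRestrict (F : Finset (Finset α)) {S X : Finset α} (h : Disjoint X S) :
    famRestrict (famRestrict F S) X = famRestrict F (S ∪ X) := by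
  ext B
  simp only [mem_famRestrict]
  constructor
  · rintro ⟨-, ⟨A, hA, hSA, rfl⟩, hXA, rfl⟩
    exact ⟨A, hA, union_subset hSA (hXA.trans sdiff_subset), by rw [sdiff_sdiff, sup_eq_union]⟩
  · rintro ⟨A, hA, hSXA, rfl⟩
    refine ⟨A \ S, ⟨A, hA, subset_union_left.trans hSXA, rfl⟩,
      subset_sdiff.2 ⟨subset_union_right.trans hSXA, h⟩, ?_⟩
    rw [sdiff_sdiff, sup_eq_union]

lemma famRestrict_famRestrict_of_not_disjoint (F : Finset (Finset α)) {S X : Finset α}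
    (h : ¬ Disjoint X S) : famRestrict (famRestrict F S) X = ∅ := by
  refine eq_empty_of_forall_notMem fun B hB => h ?_
  obtain ⟨C, hC, hXC, -⟩ := mem_famRestrict.1 hB
  obtain ⟨A, -, -, rfl⟩ := mem_famRestrict.1 hC
  exact (subset_sdiff.1 hXC).2

lemma mem_famShadowLe {𝒜 : Finset (Finset α)} {S : Finset α} {q : ℕ} :
    S ∈ famShadowLe 𝒜 q ↔ ∃ A ∈ 𝒜, S ⊆ A ∧ S.card ≤ q := by
  simp only [famShadowLe, famShadow, mem_biUnion, mem_range, mem_powersetCard]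
  constructor
  · rintro ⟨j, hj, A, hA, hSA, rfl⟩
    exact ⟨A, hA, hSA, by omega⟩
  · rintro ⟨A, hA, hSA, hq⟩
    exact ⟨S.card, by omega, A, hA, hSA, rfl⟩

/-- The relative density of `F(S)` in `𝒜(S)` is at least `τ^{|S|}` times that of `F` in `𝒜`
(denominators cleared). -/
def IsDenseLink (τ : ℝ) (𝒜 F : Finset (Finset α)) (S : Finset α) : Prop :=
  τ ^ S.card * F.card * ((famRestrict 𝒜 S).card : ℝ) ≤ (famRestrict F S).card * 𝒜.card

lemma exists_maximal_isDenseLink (τ : ℝ) (𝒜 : Finset (Finset α)) {F : Finset (Finset α)}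
    (hF : F.Nonempty) :
    ∃ S, (famRestrict F S).Nonempty ∧ IsDenseLink τ 𝒜 F S ∧
      ∀ T, S ⊂ T → (famRestrict F T).Nonempty → ¬ IsDenseLink τ 𝒜 F T := by
  have hmem : ∀ T, T ∈ F.biUnion powerset ↔ (famRestrict F T).Nonempty := by
    simp [famRestrict_nonempty]
  have hempty : (∅ : Finset α) ∈ (F.biUnion powerset).filter (IsDenseLink τ 𝒜 F) :=
    mem_filter.2 ⟨(hmem ∅).2 (by simpa using hF), by simp [IsDenseLink, mul_comm]⟩
  obtain ⟨S, hS, hmax⟩ := exists_max_image _ Finset.card ⟨∅, hempty⟩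
  obtain ⟨hSF, hSdense⟩ := mem_filter.1 hS
  refine ⟨S, (hmem S).1 hSF, hSdense, fun T hST hT hTdense => ?_⟩
  have := hmax T (mem_filter.2 ⟨(hmem T).2 hT, hTdense⟩)
  exact (card_lt_card hST).not_ge this

lemma isHomog_famRestrict_of_maximal {τ : ℝ} (hτ : 0 ≤ τ) {𝒜 F : Finset (Finset α)}
    (h𝒜 : 0 < 𝒜.card) {S : Finset α} (hS : IsDenseLink τ 𝒜 F S)
    (hmax : ∀ T, S ⊂ T → (famRestrict F T).Nonempty → ¬ IsDenseLink τ 𝒜 F T) :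
    IsHomog τ (famRestrict F S) (famRestrict 𝒜 S) := by
  intro X
  by_cases hXS : Disjoint X S
  swap
  · rw [famRestrict_famRestrict_of_not_disjoint F hXS, card_empty, Nat.cast_zero, zero_mul]
    positivity
  rcases X.eq_empty_or_nonempty with rfl | hX
  · simp
  rw [famRestrict_famRestrict F hXS, famRestrict_famRestrict 𝒜 hXS]
  by_cases hne : (famRestrict F (S ∪ X)).Nonempty
  swap
  · rw [not_nonempty_iff_eq_empty.1 hne, card_empty, Nat.cast_zero, zero_mul]
    positivity
  obtain ⟨x, hx⟩ := hX
  have hST : S ⊂ S ∪ X := (ssubset_iff_of_subset subset_union_left).2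
    ⟨x, mem_union_right _ hx, disjoint_left.1 hXS hx⟩
  have hsparse := not_le.1 (hmax _ hST hne)
  rw [card_union_of_disjoint hXS.symm, pow_add] at hsparse
  refine le_of_mul_le_mul_right ?_ (Nat.cast_pos.2 h𝒜 : (0 : ℝ) < 𝒜.card)
  calc ((famRestrict F (S ∪ X)).card : ℝ) * (famRestrict 𝒜 S).card * 𝒜.card
      = (famRestrict F (S ∪ X)).card * 𝒜.card * (famRestrict 𝒜 S).card := by ring
    _ ≤ τ ^ S.card * τ ^ X.card * F.card * (famRestrict 𝒜 (S ∪ X)).card *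
          (famRestrict 𝒜 S).card := by gcongr
    _ = τ ^ X.card * (famRestrict 𝒜 (S ∪ X)).card *
          (τ ^ S.card * F.card * (famRestrict 𝒜 S).card) := by ring
    _ ≤ τ ^ X.card * (famRestrict 𝒜 (S ∪ X)).card * ((famRestrict F S).card * 𝒜.card) := by
          exact mul_le_mul_of_nonneg_left hS (by positivity)
    _ = τ ^ X.card * (famRestrict F S).card * (famRestrict 𝒜 (S ∪ X)).card * 𝒜.card := by ring

section DenseLinkBounds

variable {τ c : ℝ} {𝒜 F : Finset (Finset α)} {S : Finset α}

lemma le_card_famRestrict_of_isDenseLink (hτ : 1 ≤ τ) (h𝒜 : 0 < 𝒜.card)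
    (hF : c * 𝒜.card ≤ F.card) (hS : IsDenseLink τ 𝒜 F S) :
    c * (famRestrict 𝒜 S).card ≤ (famRestrict F S).card := by
  refine le_of_mul_le_mul_right ?_ (Nat.cast_pos.2 h𝒜 : (0 : ℝ) < 𝒜.card)
  calc c * (famRestrict 𝒜 S).card * 𝒜.card = c * 𝒜.card * (famRestrict 𝒜 S).card := by ring
    _ ≤ 1 * F.card * (famRestrict 𝒜 S).card := by rw [one_mul]; gcongr
    _ ≤ τ ^ S.card * F.card * (famRestrict 𝒜 S).card := by gcongr; exact one_le_pow₀ hτ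
    _ ≤ (famRestrict F S).card * 𝒜.card := hS

lemma card_le_of_isDenseLink {q : ℕ} (hτ : 1 ≤ τ) (hc : 1 ≤ c * τ ^ (q + 1)) (hF𝒜 : F ⊆ 𝒜)
    (hF : c * 𝒜.card < F.card) (hS : IsDenseLink τ 𝒜 F S) (hne : (famRestrict F S).Nonempty) :
    S.card ≤ q := by
  by_contra! hq
  have hsub : famRestrict F S ⊆ famRestrict 𝒜 S := famRestrict_mono hF𝒜 S
  have hb : (0 : ℝ) < (famRestrict 𝒜 S).card := Nat.cast_pos.2 (card_pos.2 (hne.mono hsub))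
  have hab : ((famRestrict F S).card : ℝ) ≤ (famRestrict 𝒜 S).card := by
    exact_mod_cast card_le_card hsub
  have hτS : c * τ ^ (q + 1) ≤ c * τ ^ S.card := by
    have hc0 : 0 ≤ c := (pos_of_mul_pos_left (zero_lt_one.trans_le hc) (by positivity)).le
    gcongr
    exact hq
  have : ((famRestrict 𝒜 S).card : ℝ) * 𝒜.card < (famRestrict 𝒜 S).card * 𝒜.card :=
    calc ((famRestrict 𝒜 S).card : ℝ) * 𝒜.card = 1 * 𝒜.card * (famRestrict 𝒜 S).card := by ring
      _ ≤ c * τ ^ S.card * 𝒜.card * (famRestrict 𝒜 S).card := by gcongr; exact hc.trans hτS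
      _ < τ ^ S.card * F.card * (famRestrict 𝒜 S).card := by
          rw [mul_comm c, mul_assoc (τ ^ S.card)]; gcongr
      _ ≤ (famRestrict F S).card * 𝒜.card := hS
      _ ≤ (famRestrict 𝒜 S).card * 𝒜.card := by gcongr
  exact this.false

end DenseLinkBounds

structure IsHomogDecomposition (q : ℕ) (τ c : ℝ) (𝒜 F 𝒮 : Finset (Finset α))
    (Fs : Finset α → Finset (Finset α)) (ℛ : Finset (Finset α)) : Prop where
  subset_famShadowLe : 𝒮 ⊆ famShadowLe 𝒜 q
  rest_subset : ℛ ⊆ F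
  piece_subset : ∀ S ∈ 𝒮, Fs S ⊆ famRestrict 𝒜 S
  eq_union : F = ℛ ∪ 𝒮.biUnion (fun S => (Fs S).image fun A => S ∪ A)
  disjoint_rest : Disjoint ℛ (𝒮.biUnion fun S => (Fs S).image fun A => S ∪ A)
  disjoint_pieces : ∀ S ∈ 𝒮, ∀ S' ∈ 𝒮, S ≠ S' →
    Disjoint ((Fs S).image fun A => S ∪ A) ((Fs S').image fun A => S' ∪ A)
  isHomog : ∀ S ∈ 𝒮, IsHomog τ (Fs S) (famRestrict 𝒜 S)
  le_card_piece : ∀ S ∈ 𝒮, c * (famRestrict 𝒜 S).card ≤ (Fs S).card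
  card_rest_le : (ℛ.card : ℝ) ≤ c * 𝒜.card

namespace IsHomogDecomposition

variable {q : ℕ} {τ c : ℝ} {𝒜 F 𝒮 : Finset (Finset α)} {Fs : Finset α → Finset (Finset α)}
  {ℛ : Finset (Finset α)} {S : Finset α}

lemma of_card_le (q : ℕ) (τ : ℝ) (h : (F.card : ℝ) ≤ c * 𝒜.card) :
    IsHomogDecomposition q τ c 𝒜 F ∅ (fun _ => ∅) F where
  subset_famShadowLe := empty_subset _
  rest_subset := subset_rfl
  piece_subset := by simp
  eq_union := by simp
  disjoint_rest := by simp
  disjoint_pieces := by simp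
  isHomog := by simp
  le_card_piece := by simp
  card_rest_le := h

lemma exists_superset_of_mem (hd : IsHomogDecomposition q τ c 𝒜 F 𝒮 Fs ℛ) (hc : 0 < c)
    (hS : S ∈ 𝒮) (h𝒜S : (famRestrict 𝒜 S).Nonempty) : ∃ A ∈ F, S ⊆ A := by
  have : 0 < (Fs S).card := by
    have := (hd.le_card_piece S hS).trans_lt' (by have := card_pos.2 h𝒜S; positivity)
    exact_mod_cast this
  obtain ⟨A, hA⟩ := card_pos.1 this
  refine ⟨S ∪ A, ?_, subset_union_left⟩
  rw [hd.eq_union]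
  exact mem_union_right _ (mem_biUnion.2 ⟨S, hS, mem_image_of_mem _ hA⟩)

lemma insert_piece (hd : IsHomogDecomposition q τ c 𝒜 (F.filter fun A => ¬ S ⊆ A) 𝒮 Fs ℛ)
    (hF : F ⊆ 𝒜) (hS𝒮 : S ∉ 𝒮) (hS : S ∈ famShadowLe 𝒜 q)
    (hhomog : IsHomog τ (famRestrict F S) (famRestrict 𝒜 S))
    (hlarge : c * (famRestrict 𝒜 S).card ≤ (famRestrict F S).card) :
    IsHomogDecomposition q τ c 𝒜 F (insert S 𝒮) (Function.update Fs S (famRestrict F S)) ℛ := by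
  set Fs' := Function.update Fs S (famRestrict F S)
  have hupd : ∀ T ∈ 𝒮, Fs' T = Fs T := fun T hT =>
    Function.update_of_ne (ne_of_mem_of_not_mem hT hS𝒮) _ _
  have hFsS : Fs' S = famRestrict F S := Function.update_self ..
  have hpieceS : (Fs' S).image (fun A => S ∪ A) = F.filter fun A => S ⊆ A := by
    rw [hFsS, image_union_famRestrict]
  have hpieces : (insert S 𝒮).biUnion (fun T => (Fs' T).image fun A => T ∪ A) =
      F.filter (fun A => S ⊆ A) ∪ 𝒮.biUnion (fun T => (Fs T).image fun A => T ∪ A) := by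
    rw [biUnion_insert, hpieceS, biUnion_congr rfl fun T hT => by rw [hupd T hT]]
  have hsub : ∀ T ∈ 𝒮, (Fs T).image (fun A => T ∪ A) ⊆ F.filter fun A => ¬ S ⊆ A :=
    fun T hT => hd.eq_union ▸ subset_union_right.trans'
      (subset_biUnion_of_mem (fun T => (Fs T).image fun A => T ∪ A) hT)
  have hdisj := disjoint_filter_filter_not F F fun A => S ⊆ A
  refine
    { subset_famShadowLe := insert_subset hS hd.subset_famShadowLe
      rest_subset := hd.rest_subset.trans (filter_subset _ _)
      piece_subset := fun T hT => by
        rcases mem_insert.1 hT with rfl | hT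
        · exact hFsS ▸ famRestrict_mono hF T
        · exact hupd T hT ▸ hd.piece_subset T hT
      eq_union := by
        rw [hpieces, union_left_comm, ← hd.eq_union, filter_union_filter_not_eq]
      disjoint_rest := by
        rw [hpieces]
        exact disjoint_union_right.2 ⟨hdisj.symm.mono_left hd.rest_subset, hd.disjoint_rest⟩
      disjoint_pieces := ?_
      isHomog := fun T hT => by
        rcases mem_insert.1 hT with rfl | hT
        · exact hFsS ▸ hhomog
        · exact hupd T hT ▸ hd.isHomog T hT
      le_card_piece := fun T hT => by
        rcases mem_insert.1 hT with rfl | hT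
        · exact hFsS ▸ hlarge
        · exact hupd T hT ▸ hd.le_card_piece T hT
      card_rest_le := hd.card_rest_le }
  intro T hT T' hT' hTT'
  rcases mem_insert.1 hT with rfl | hT𝒮 <;> rcases mem_insert.1 hT' with rfl | hT'𝒮
  · exact absurd rfl hTT'
  · rw [hpieceS, hupd T' hT'𝒮]
    exact hdisj.mono_right (hsub T' hT'𝒮)
  · rw [hpieceS, hupd T hT𝒮]
    exact (hdisj.mono_right (hsub T hT𝒮)).symm
  · rw [hupd T hT𝒮, hupd T' hT'𝒮]
    exact hd.disjoint_pieces T hT𝒮 T' hT'𝒮 hTT'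

end IsHomogDecomposition

theorem exists_isHomogDecomposition {q : ℕ} {τ c : ℝ} (hτ : 1 ≤ τ) (hc : 1 ≤ c * τ ^ (q + 1))
    {𝒜 F : Finset (Finset α)} (hF : F ⊆ 𝒜) :
    ∃ 𝒮 Fs ℛ, IsHomogDecomposition q τ c 𝒜 F 𝒮 Fs ℛ := by
  have hc0 : 0 < c := pos_of_mul_pos_left (zero_lt_one.trans_le hc) (by positivity)
  induction F using Finset.strongInduction with
  | H F ih =>
  by_cases hsmall : (F.card : ℝ) ≤ c * 𝒜.card
  · exact ⟨∅, fun _ => ∅, F, .of_card_le q τ hsmall⟩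
  rw [not_le] at hsmall
  have hFne : F.Nonempty :=
    card_pos.1 (by exact_mod_cast (by positivity : (0 : ℝ) ≤ c * 𝒜.card).trans_lt hsmall)
  have h𝒜 : 0 < 𝒜.card := (card_pos.2 hFne).trans_le (card_le_card hF)
  obtain ⟨S, hne, hS, hmax⟩ := exists_maximal_isDenseLink τ 𝒜 hFne
  obtain ⟨A, hA, hSA⟩ := famRestrict_nonempty.1 hne
  obtain ⟨𝒮, Fs, ℛ, hd⟩ :=
    ih (F.filter fun B => ¬ S ⊆ B) (filter_ssubset.2 ⟨A, hA, fun h => h hSA⟩)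
      ((filter_subset _ _).trans hF)
  have hS𝒮 : S ∉ 𝒮 := fun hS𝒮 => by
    obtain ⟨B, hB, hSB⟩ := hd.exists_superset_of_mem hc0 hS𝒮 (hne.mono (famRestrict_mono hF S))
    exact (mem_filter.1 hB).2 hSB
  have hSq : S ∈ famShadowLe 𝒜 q :=
    mem_famShadowLe.2 ⟨A, hF hA, hSA, card_le_of_isDenseLink hτ hc hF hsmall hS hne⟩
  exact ⟨_, _, _, hd.insert_piece hF hS𝒮 hSq
    (isHomog_famRestrict_of_maximal (by positivity) h𝒜 hS hmax)
    (le_card_famRestrict_of_isDenseLink hτ h𝒜 hsmall.le hS)⟩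

end HomogeneousDecomposition

theorem spread_approximation_large_measure_general {α : Type*} [DecidableEq α]
    (q : ℕ) (τ : ℝ) (hτ : 1 < τ)
    (𝒜 : Finset (Finset α))
    (F : Finset (Finset α)) (hF : F ⊆ 𝒜) :
    ∃ (𝒮 : Finset (Finset α)) (Fs : Finset α → Finset (Finset α))
      (ℛ : Finset (Finset α)),
      𝒮 ⊆ famShadowLe 𝒜 q ∧ ℛ ⊆ F ∧
      (∀ S ∈ 𝒮, Fs S ⊆ famRestrict 𝒜 S) ∧
      F = ℛ ∪ 𝒮.biUnion (fun S => (Fs S).image fun A => S ∪ A) ∧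
      Disjoint ℛ (𝒮.biUnion fun S => (Fs S).image fun A => S ∪ A) ∧
      (∀ S ∈ 𝒮, ∀ S' ∈ 𝒮, S ≠ S' →
        Disjoint ((Fs S).image fun A => S ∪ A) ((Fs S').image fun A => S' ∪ A)) ∧
      (∀ S ∈ 𝒮, IsHomog τ (Fs S) (famRestrict 𝒜 S)) ∧
      (∀ S ∈ 𝒮, 16 * τ ^ (-(q:ℤ)) * ((famRestrict 𝒜 S).card : ℝ) ≤ ((Fs S).card : ℝ)) ∧
      ((ℛ.card : ℝ) ≤ 32 * τ ^ (-(q:ℤ)) * (𝒜.card : ℝ)) := by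
  have hτ0 : 0 < τ := zero_lt_one.trans hτ
  have hc : 1 ≤ 32 * τ ^ (-(q : ℤ)) * τ ^ (q + 1) := by
    rw [mul_assoc, ← zpow_natCast, ← zpow_add₀ hτ0.ne']
    push_cast
    rw [neg_add_cancel_left, zpow_one]
    linarith
  obtain ⟨𝒮, Fs, ℛ, hd⟩ := exists_isHomogDecomposition hτ.le hc hF
  refine ⟨𝒮, Fs, ℛ, hd.subset_famShadowLe, hd.rest_subset, hd.piece_subset, hd.eq_union,
    hd.disjoint_rest, hd.disjoint_pieces, hd.isHomog, fun S hS => ?_, hd.card_rest_le⟩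
  refine le_trans ?_ (hd.le_card_piece S hS)
  gcongr
  norm_num

/-- Lemma 6.4 (spread approximation with large measure). -/
theorem spread_approximation_large_measure {α : Type*} [DecidableEq α]
    (q k : ℕ) (hq : 1 ≤ q) (τ r : ℝ) (hτ : 1 < τ) (hr : 1 ≤ r)
    (𝒜 : Finset (Finset α)) (hAunif : IsUniform 𝒜 k) (hAspread : IsSpread r 𝒜)
    (F : Finset (Finset α)) (hF : F ⊆ 𝒜) :
    ∃ (𝒮 : Finset (Finset α)) (Fs : Finset α → Finset (Finset α))
      (ℛ : Finset (Finset α)),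
      𝒮 ⊆ famShadowLe 𝒜 q ∧ ℛ ⊆ F ∧
      (∀ S ∈ 𝒮, Fs S ⊆ famRestrict 𝒜 S) ∧
      F = ℛ ∪ 𝒮.biUnion (fun S => (Fs S).image fun A => S ∪ A) ∧
      Disjoint ℛ (𝒮.biUnion fun S => (Fs S).image fun A => S ∪ A) ∧
      (∀ S ∈ 𝒮, ∀ S' ∈ 𝒮, S ≠ S' →
        Disjoint ((Fs S).image fun A => S ∪ A) ((Fs S').image fun A => S' ∪ A)) ∧
      (∀ S ∈ 𝒮, IsHomog τ (Fs S) (famRestrict 𝒜 S)) ∧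
      (∀ S ∈ 𝒮, 16 * τ ^ (-(q:ℤ)) * ((famRestrict 𝒜 S).card : ℝ) ≤ ((Fs S).card : ℝ)) ∧
      ((ℛ.card : ℝ) ≤ 32 * τ ^ (-(q:ℤ)) * (𝒜.card : ℝ)) :=
  spread_approximation_large_measure_general q τ hτ 𝒜 F hF
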